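/- The submonoid D_n = {α ∈ ℤⁿ : α ≤_lex 0} of ℤⁿ (with the lexicographic order) is prismal: it is pure, and for every real vector subspace W of ℝⁿ, the monoid ℤⁿ ∩ topological-closure(conv(D_n ∩ W)) is finitely generated. -/
import Mathlib


/-- Canonical embedding of `ℤⁿ` into `ℝⁿ`. -/
def coeR {n : ℕ} (α : Fin n → ℤ) : Fin n → ℝ := fun i => (α i : ℝ)

/-- Convex hull in `ℝⁿ` of a subset of `ℤⁿ`. -/
def convC {n : ℕ} (C : Set (Fin n → ℤ)) : Set (Fin n → ℝ) :=
  convexHull ℝ (coeR '' C)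

/-- The closure `cl(C) = ℤⁿ ∩ topological-closure(conv C)` of a subset of `ℤⁿ`. -/
def intCl {n : ℕ} (C : Set (Fin n → ℤ)) : Set (Fin n → ℤ) :=
  {α | coeR α ∈ closure (convC C)}

/-- `C` is pure: `kα ∈ C` with `k ≥ 1` implies `α ∈ C`. -/
def IsPure {n : ℕ} (C : Set (Fin n → ℤ)) : Prop :=
  ∀ (k : ℕ) (α : Fin n → ℤ), 1 ≤ k → k • α ∈ C → α ∈ C

/-- `C` is a submonoid of `(ℤⁿ, +)` (as a set). -/
def IsSubmonoidSet {n : ℕ} (C : Set (Fin n → ℤ)) : Prop :=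
  (0 : Fin n → ℤ) ∈ C ∧ ∀ a ∈ C, ∀ b ∈ C, a + b ∈ C

/-- `M` is a finitely generated monoid (as a subset of `ℤⁿ`). -/
def IsFGSet {n : ℕ} (M : Set (Fin n → ℤ)) : Prop :=
  ∃ F : Finset (Fin n → ℤ),
    (AddSubmonoid.closure (F : Set (Fin n → ℤ)) : Set (Fin n → ℤ)) = M

/-- `C` is almost prismal: for every real subspace `V ⊆ ℝⁿ`, `cl(C ∩ V)` is finitely generated. -/
def AlmostPrismal {n : ℕ} (C : Set (Fin n → ℤ)) : Prop :=
  ∀ V : Submodule ℝ (Fin n → ℝ), IsFGSet (intCl {α ∈ C | coeR α ∈ V})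

/-- `C` is prismal: pure and almost prismal. -/
def Prismal {n : ℕ} (C : Set (Fin n → ℤ)) : Prop := IsPure C ∧ AlmostPrismal C

section AuxCoeR

variable {n : ℕ}

lemma coeR_zero : coeR (0 : Fin n → ℤ) = 0 := by funext i; simp [coeR]

lemma coeR_add (a b : Fin n → ℤ) : coeR (a + b) = coeR a + coeR b := by
  funext i; simp [coeR]

lemma coeR_neg (a : Fin n → ℤ) : coeR (-a) = - coeR a := by
  funext i; simp [coeR]

lemma coeR_sub (a b : Fin n → ℤ) : coeR (a - b) = coeR a - coeR b := by
  funext i; simp [coeR]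

lemma coeR_zsmul (m : ℤ) (a : Fin n → ℤ) : coeR (m • a) = (m : ℝ) • coeR a := by
  funext i; simp [coeR]

lemma coeR_inj : Function.Injective (coeR (n := n)) := by
  intro a b h
  funext i
  have := congrFun h i
  simpa [coeR] using this

end AuxCoeR

lemma lex_pure {n : ℕ} :
    IsPure {α : Fin n → ℤ | α = 0 ∨ ∃ i : Fin n, (∀ j, j < i → α j = 0) ∧ α i < 0} := by
  intro k α hk hmem
  have hk0 : (k : ℤ) > 0 := by exact_mod_cast hk
  rcases hmem with h0 | ⟨i, hz, hneg⟩
  · left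
    funext j
    have := congrFun h0 j
    have : (k : ℤ) * α j = 0 := by simpa [Pi.smul_apply, nsmul_eq_mul] using this
    rcases mul_eq_zero.mp this with h | h
    · omega
    · simpa using h
  · right
    refine ⟨i, fun j hj => ?_, ?_⟩
    · have := hz j hj
      have : (k : ℤ) * α j = 0 := by simpa [Pi.smul_apply, nsmul_eq_mul] using this
      rcases mul_eq_zero.mp this with h | h
      · omega
      · exact h
    · have : (k : ℤ) * α i < 0 := by simpa [Pi.smul_apply, nsmul_eq_mul] using hneg
      nlinarith [hk0]

lemma lex_almost_prismal {n : ℕ} (V : Submodule ℝ (Fin n → ℝ)) :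
    IsFGSet (intCl {α ∈ {α : Fin n → ℤ | α = 0 ∨ ∃ i : Fin n, (∀ j, j < i → α j = 0) ∧ α i < 0} |
      coeR α ∈ V}) := by
  classical
  set D : Set (Fin n → ℤ) :=
    {α : Fin n → ℤ | α = 0 ∨ ∃ i : Fin n, (∀ j, j < i → α j = 0) ∧ α i < 0} with hD
  set S : Set (Fin n → ℤ) := {α ∈ D | coeR α ∈ V} with hS
  have h0S : (0 : Fin n → ℤ) ∈ S := ⟨Or.inl rfl, by rw [coeR_zero]; exact V.zero_mem⟩
  by_cases hex : ∃ m : ℕ, ∃ h : m < n, ∃ α : Fin n → ℤ, coeR α ∈ V ∧ α ⟨m, h⟩ ≠ 0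
  · -- main case
    set m₀ := Nat.find hex with hm₀def
    obtain ⟨hm₀n, α₀, hα₀V, hα₀⟩ := Nat.find_spec hex
    set i₀ : Fin n := ⟨m₀, hm₀n⟩ with hi₀def
    have F1 : ∀ α : Fin n → ℤ, coeR α ∈ V → ∀ j : Fin n, (j : ℕ) < m₀ → α j = 0 := by
      intro α hα j hj
      by_contra hne
      exact Nat.find_min hex hj ⟨j.2, α, hα, by simpa using hne⟩
    -- a strictly negative element
    obtain ⟨β, hβV, hβneg⟩ : ∃ β : Fin n → ℤ, coeR β ∈ V ∧ β i₀ < 0 := by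
      rcases lt_trichotomy (α₀ i₀) 0 with h | h | h
      · exact ⟨α₀, hα₀V, h⟩
      · exact absurd h hα₀
      · exact ⟨-α₀, by rw [coeR_neg]; exact V.neg_mem hα₀V, by simpa using h⟩
    have F3 : ∀ α : Fin n → ℤ, coeR α ∈ V → α i₀ < 0 → α ∈ S := by
      intro α hV hneg
      exact ⟨Or.inr ⟨i₀, fun j hj => F1 α hV j hj, hneg⟩, hV⟩
    have F4 : ∀ α ∈ S, α i₀ ≤ 0 := by
      rintro α ⟨h | ⟨i, hz, hneg⟩, hV⟩
      · rw [h]; simp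
      · rcases lt_trichotomy i i₀ with hlt | heq | hgt
        · exact absurd (F1 α hV i hlt) (ne_of_lt hneg)
        · rw [← heq]; exact le_of_lt hneg
        · rw [hz i₀ hgt]
    set L : Set (Fin n → ℤ) := {α : Fin n → ℤ | coeR α ∈ V} with hL
    set T : Set (Fin n → ℝ) := coeR '' L with hT
    set U : Submodule ℝ (Fin n → ℝ) := Submodule.span ℝ T with hU
    set K : Set (Fin n → ℝ) := {x | x ∈ U ∧ x i₀ ≤ 0} with hK
    have hTV : T ⊆ (V : Set (Fin n → ℝ)) := by rintro x ⟨α, hα, rfl⟩; exact hα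
    have hUV : U ≤ V := Submodule.span_le.mpr hTV
    -- closure(conv S) ⊆ K
    have hsub : closure (convC S) ⊆ K := by
      have hKconv : Convex ℝ K := by
        have h1 : Convex ℝ (U : Set (Fin n → ℝ)) := U.convex
        have h2 : Convex ℝ {x : Fin n → ℝ | x i₀ ≤ 0} :=
          convex_halfSpace_le ⟨fun a b => rfl, fun c x => rfl⟩ 0
        exact h1.inter h2
      have hKclosed : IsClosed K := by
        have h1 : IsClosed (U : Set (Fin n → ℝ)) := U.closed_of_finiteDimensional
        have h2 : IsClosed {x : Fin n → ℝ | x i₀ ≤ 0} :=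
          isClosed_le (continuous_apply i₀) continuous_const
        exact h1.inter h2
      refine closure_minimal (convexHull_min ?_ hKconv) hKclosed
      rintro x ⟨α, hα, rfl⟩
      refine ⟨Submodule.subset_span ⟨α, hα.2, rfl⟩, ?_⟩
      have := F4 α hα
      show ((α i₀ : ℤ) : ℝ) ≤ 0
      exact_mod_cast this
    -- K ⊆ closure(conv S)
    have hsup : K ⊆ closure (convC S) := by
      -- first: points of U with strictly negative i₀ coordinate
      have G : ∀ y : Fin n → ℝ, y ∈ U → y i₀ < 0 → y ∈ closure (convC S) := by
        intro y hyU hyneg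
        obtain ⟨m, f, g, hsum⟩ := Submodule.mem_span_set'.mp hyU
        set φ : (Fin m → ℝ) → (Fin n → ℝ) := fun c => ∑ i, c i • (g i : Fin n → ℝ) with hφdef
        have hφ : Continuous φ := by
          apply continuous_finset_sum
          intro i _
          exact (continuous_apply i).smul continuous_const
        set Qs : Set (Fin m → ℝ) := Set.pi Set.univ (fun _ => Set.range ((↑) : ℚ → ℝ)) with hQs
        have hQdense : Dense Qs := dense_pi Set.univ (fun i _ => Rat.denseRange_cast)
        have hyc : y ∈ closure (φ '' Qs) := by
          have h1 : f ∈ closure Qs := by rw [hQdense.closure_eq]; trivial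
          have h2 : φ f ∈ φ '' closure Qs := ⟨f, h1, rfl⟩
          have h3 : φ '' closure Qs ⊆ closure (φ '' Qs) := image_closure_subset_closure_image hφ
          rw [← hsum]
          exact h3 h2
        have hO : IsOpen {x : Fin n → ℝ | x i₀ < 0} :=
          isOpen_lt (continuous_apply i₀) continuous_const
        have hyc2 : y ∈ closure (φ '' Qs ∩ {x | x i₀ < 0}) :=
          hO.closure_inter ⟨hyc, hyneg⟩
        refine closure_mono ?_ hyc2
        -- rational points with negative i₀ coordinate lie in conv S
        rintro z ⟨⟨c, hcQ, rfl⟩, hzneg⟩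
        choose q hq using fun i => hcQ i (Set.mem_univ i)
        choose a ha1 ha2 using fun i : Fin m => (g i).2
        set N : ℕ := ∏ i, (q i).den with hNdef
        have hNpos : 0 < N := Finset.prod_pos fun i _ => (q i).pos
        have hdvd : ∀ i, (q i).den ∣ N := fun i => Finset.dvd_prod_of_mem _ (Finset.mem_univ i)
        choose kk hkk using hdvd
        set mz : Fin m → ℤ := fun i => (q i).num * (kk i : ℤ) with hmzdef
        have hqN : ∀ i, ((mz i : ℚ)) = q i * N := by
          intro i
          have hden : ((q i).den : ℚ) ≠ 0 := by exact_mod_cast (q i).den_ne_zero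
          have h1 : (q i) * ((q i).den : ℚ) = (q i).num := by
            have h0 : ((q i).num : ℚ) / ((q i).den : ℚ) = q i := Rat.num_div_den (q i)
            rw [div_eq_iff hden] at h0
            rw [h0]
          calc ((mz i : ℚ)) = ((q i).num : ℚ) * (kk i : ℚ) := by rw [hmzdef]; push_cast; ring
            _ = (q i * ((q i).den : ℚ)) * (kk i : ℚ) := by rw [h1]
            _ = q i * (((q i).den * kk i : ℕ) : ℚ) := by push_cast; ring
            _ = q i * N := by rw [← hkk i]
        set γ : Fin n → ℤ := ∑ i, mz i • a i with hγdef
        have hcoeγ : coeR γ = ∑ i, (mz i : ℝ) • coeR (a i) := by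
          funext j
          rw [hγdef]
          show ((((∑ i, mz i • a i) : Fin n → ℤ) j : ℤ) : ℝ) = _
          rw [Finset.sum_apply]
          push_cast
          rw [Finset.sum_apply]
          apply Finset.sum_congr rfl
          intro i _
          simp [coeR, Pi.smul_apply, smul_eq_mul]
        have hγV : coeR γ ∈ V := by
          rw [hcoeγ]
          exact V.sum_mem fun i _ => V.smul_mem _ (ha1 i)
        have hscale : coeR γ = (N : ℝ) • (φ c) := by
          rw [hcoeγ, hφdef]
          simp only [Finset.smul_sum]
          apply Finset.sum_congr rfl
          intro i _
          rw [ha2 i, ← hq i, smul_smul]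
          congr 1
          have := congrArg ((↑) : ℚ → ℝ) (hqN i)
          push_cast at this
          linarith
        have hγneg : γ i₀ < 0 := by
          have h1 : coeR γ i₀ < 0 := by
            rw [hscale]
            show (N : ℝ) * (φ c) i₀ < 0
            exact mul_neg_of_pos_of_neg (by exact_mod_cast hNpos) hzneg
          have h2 : ((γ i₀ : ℤ) : ℝ) < 0 := h1
          exact_mod_cast h2
        have hγS : γ ∈ S := F3 γ hγV hγneg
        have h1 : coeR γ ∈ convexHull ℝ (coeR '' S) :=
          subset_convexHull ℝ _ ⟨γ, hγS, rfl⟩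
        have h0 : (0 : Fin n → ℝ) ∈ convexHull ℝ (coeR '' S) :=
          subset_convexHull ℝ _ ⟨0, h0S, coeR_zero⟩
        have hN1 : (1 : ℝ) ≤ (N : ℝ) := by exact_mod_cast hNpos
        have hcomb := (convex_convexHull ℝ (coeR '' S)) h1 h0
          (a := 1 / N) (b := 1 - 1 / N) (by positivity)
          (by rw [sub_nonneg]; exact div_le_one_of_le₀ hN1 (by positivity)) (by ring)
        have heq : (1 / N : ℝ) • coeR γ + (1 - 1 / N : ℝ) • (0 : Fin n → ℝ) = φ c := by
          rw [smul_zero, add_zero, hscale, smul_smul, one_div,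
            inv_mul_cancel₀ (by exact_mod_cast hNpos.ne' : (N : ℝ) ≠ 0), one_smul]
        rw [heq] at hcomb
        exact hcomb
      intro x hx
      obtain ⟨hxU, hx0⟩ := hx
      have hβU : coeR β ∈ U := Submodule.subset_span ⟨β, hβV, rfl⟩
      have hβR : (coeR β) i₀ < 0 := by
        show ((β i₀ : ℤ) : ℝ) < 0
        exact_mod_cast hβneg
      have hlim : Filter.Tendsto (fun k : ℕ => x + (1 / (k + 1) : ℝ) • coeR β)
          Filter.atTop (nhds x) := by
        have h1 : Filter.Tendsto (fun k : ℕ => (1 / (k + 1) : ℝ)) Filter.atTop (nhds 0) :=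
          tendsto_one_div_add_atTop_nhds_zero_nat
        have h2 := Filter.Tendsto.add (tendsto_const_nhds (x := x))
          (h1.smul_const (coeR β))
        simpa using h2
      have hmem : x ∈ closure (closure (convC S)) := by
        refine mem_closure_of_tendsto hlim (Filter.Eventually.of_forall fun k => ?_)
        refine G _ (U.add_mem hxU (U.smul_mem _ hβU)) ?_
        have hpos : (0 : ℝ) < 1 / (k + 1) := by positivity
        have : (x + (1 / (k + 1) : ℝ) • coeR β) i₀ = x i₀ + (1 / (k + 1) : ℝ) * (coeR β) i₀ := rfl
        rw [this]
        nlinarith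
      rwa [closure_closure] at hmem
    have hKeq : closure (convC S) = K := Set.Subset.antisymm hsub hsup
    -- characterize intCl S
    have hclS : intCl S = {α : Fin n → ℤ | coeR α ∈ V ∧ α i₀ ≤ 0} := by
      ext α
      simp only [intCl, Set.mem_setOf_eq, hKeq]
      constructor
      · rintro ⟨hU', hle⟩
        have hle' : ((α i₀ : ℤ) : ℝ) ≤ 0 := hle
        exact ⟨hUV hU', by exact_mod_cast hle'⟩
      · rintro ⟨hV', hle⟩
        refine ⟨Submodule.subset_span ⟨α, hV', rfl⟩, ?_⟩
        show ((α i₀ : ℤ) : ℝ) ≤ 0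
        exact_mod_cast hle
    rw [hclS]
    -- Now show {α | coeR α ∈ V ∧ α i₀ ≤ 0} is a finitely generated monoid
    set Ggrp : AddSubgroup (Fin n → ℤ) :=
      { carrier := {α : Fin n → ℤ | coeR α ∈ V ∧ α i₀ = 0}
        zero_mem' := ⟨by rw [coeR_zero]; exact V.zero_mem, rfl⟩
        add_mem' := fun ha hb => ⟨by rw [coeR_add]; exact V.add_mem ha.1 hb.1,
          by simp [Pi.add_apply, ha.2, hb.2]⟩
        neg_mem' := fun ha => ⟨by rw [coeR_neg]; exact V.neg_mem ha.1,
          by simp [Pi.neg_apply, ha.2]⟩ } with hGgrp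
    set Lgrp : AddSubgroup (Fin n → ℤ) :=
      { carrier := {α : Fin n → ℤ | coeR α ∈ V}
        zero_mem' := by rw [Set.mem_setOf_eq, coeR_zero]; exact V.zero_mem
        add_mem' := fun ha hb => by rw [Set.mem_setOf_eq, coeR_add]; exact V.add_mem ha hb
        neg_mem' := fun ha => by rw [Set.mem_setOf_eq, coeR_neg]; exact V.neg_mem ha } with hLgrp
    -- the image of the i₀-th coordinate on Lgrp is cyclic
    set J : AddSubgroup ℤ := Lgrp.map (Pi.evalAddMonoidHom (fun _ : Fin n => ℤ) i₀) with hJ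
    obtain ⟨gJ, hgJ⟩ := Int.subgroup_cyclic J
    have hβJ : β i₀ ∈ J := ⟨β, hβV, rfl⟩
    have hgJmem : gJ ∈ J := by rw [hgJ]; exact AddSubgroup.subset_closure rfl
    have hgJ0 : gJ ≠ 0 := by
      rintro rfl
      rw [hgJ] at hβJ
      rw [AddSubgroup.mem_closure_singleton] at hβJ
      obtain ⟨k, hk⟩ := hβJ
      simp at hk
      omega
    have hdivis : ∀ α : Fin n → ℤ, coeR α ∈ V → ∃ cc : ℤ, α i₀ = cc * gJ := by
      intro α hV'
      have : α i₀ ∈ J := ⟨α, hV', rfl⟩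
      rw [hgJ, AddSubgroup.mem_closure_singleton] at this
      obtain ⟨k, hk⟩ := this
      exact ⟨k, by rw [← hk, smul_eq_mul]⟩
    -- get β' ∈ Lgrp with β' i₀ = a neg generator
    obtain ⟨βg, hβgV, hβgi⟩ : ∃ βg : Fin n → ℤ, coeR βg ∈ V ∧ βg i₀ = gJ := hgJmem
    obtain ⟨β', hβ'V, hβ'neg, hβ'div⟩ :
        ∃ β' : Fin n → ℤ, coeR β' ∈ V ∧ β' i₀ < 0 ∧
          ∀ α : Fin n → ℤ, coeR α ∈ V → ∃ cc : ℤ, α i₀ = cc * β' i₀ := by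
      rcases lt_trichotomy gJ 0 with h | h | h
      · exact ⟨βg, hβgV, by omega, fun α hV' => by rw [hβgi]; exact hdivis α hV'⟩
      · exact absurd h hgJ0
      · refine ⟨-βg, by rw [coeR_neg]; exact V.neg_mem hβgV, by simp; omega, ?_⟩
        intro α hV'
        obtain ⟨cc, hcc⟩ := hdivis α hV'
        exact ⟨-cc, by simp [hβgi, hcc]⟩
    -- Ggrp is finitely generated
    have hNoeth : IsNoetherian ℤ (Fin n → ℤ) := inferInstance
    obtain ⟨F₀, hF₀⟩ := (IsNoetherian.noetherian (AddSubgroup.toIntSubmodule Ggrp))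
    have hF₀grp : AddSubgroup.closure (F₀ : Set (Fin n → ℤ)) = Ggrp := by
      have h1 := congrArg Submodule.toAddSubgroup hF₀
      rw [Submodule.span_int_eq_addSubgroupClosure] at h1
      rw [h1]
      ext x
      rfl
    -- pass to monoid closures
    have hmono : (AddSubgroup.closure (F₀ : Set (Fin n → ℤ))).toAddSubmonoid =
        AddSubmonoid.closure ((F₀ : Set (Fin n → ℤ)) ∪ -(F₀ : Set (Fin n → ℤ))) :=
      AddSubgroup.closure_toAddSubmonoid _
    set F : Finset (Fin n → ℤ) := (F₀ ∪ F₀.image (fun x => -x)) ∪ {β'} with hF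
    refine ⟨F, ?_⟩
    have hFset : (F : Set (Fin n → ℤ)) =
        ((F₀ : Set (Fin n → ℤ)) ∪ -(F₀ : Set (Fin n → ℤ))) ∪ {β'} := by
      rw [hF]
      push_cast
      congr 1
      congr 1
      ext x
      simp [Set.mem_neg]
    -- target monoid
    have hGsub : ∀ x ∈ Ggrp, coeR x ∈ V ∧ x i₀ ≤ 0 := by
      intro x hx
      exact ⟨hx.1, le_of_eq hx.2⟩
    apply Set.Subset.antisymm
    · -- closure F ⊆ target
      intro x hx
      have hxm : x ∈ AddSubmonoid.closure (F : Set (Fin n → ℤ)) := hx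
      have : (F : Set (Fin n → ℤ)) ⊆ {α : Fin n → ℤ | coeR α ∈ V ∧ α i₀ ≤ 0} := by
        rw [hFset]
        rintro y ((hy | hy) | hy)
        · have : y ∈ Ggrp := hF₀grp ▸ AddSubgroup.subset_closure hy
          exact hGsub y this
        · rw [Set.mem_neg] at hy
          have : -y ∈ Ggrp := hF₀grp ▸ AddSubgroup.subset_closure hy
          have h2 : y ∈ Ggrp := by simpa using Ggrp.neg_mem this
          exact hGsub y h2
        · rw [Set.mem_singleton_iff] at hy
          subst hy
          exact ⟨hβ'V, le_of_lt hβ'neg⟩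
      -- use closure_le into the submonoid of the target set
      set Msub : AddSubmonoid (Fin n → ℤ) :=
        { carrier := {α : Fin n → ℤ | coeR α ∈ V ∧ α i₀ ≤ 0}
          zero_mem' := ⟨by rw [coeR_zero]; exact V.zero_mem, le_refl 0⟩
          add_mem' := fun ha hb => ⟨by rw [coeR_add]; exact V.add_mem ha.1 hb.1, by
            have h2 := ha.2
            have h3 := hb.2
            rw [Pi.add_apply]
            omega⟩ } with hMsub
      have hle : AddSubmonoid.closure (F : Set (Fin n → ℤ)) ≤ Msub :=
        AddSubmonoid.closure_le.mpr this
      exact hle hxm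
    · -- target ⊆ closure F
      rintro α ⟨hαV, hαle⟩
      obtain ⟨cc, hcc⟩ := hβ'div α hαV
      have hccnn : 0 ≤ cc := by nlinarith [hβ'neg, hαle, hcc]
      set δ : Fin n → ℤ := α - cc • β' with hδ
      have hδG : δ ∈ Ggrp := by
        constructor
        · rw [hδ, coeR_sub, coeR_zsmul]
          exact V.sub_mem hαV (V.smul_mem _ hβ'V)
        · rw [hδ]
          simp only [Pi.sub_apply, Pi.smul_apply, smul_eq_mul]
          omega
      have hδmem : δ ∈ AddSubmonoid.closure (F : Set (Fin n → ℤ)) := by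
        have h1 : δ ∈ (AddSubgroup.closure (F₀ : Set (Fin n → ℤ))).toAddSubmonoid := by
          rw [hF₀grp]; exact hδG
        rw [hmono] at h1
        have h2 : AddSubmonoid.closure ((F₀ : Set (Fin n → ℤ)) ∪ -(F₀ : Set (Fin n → ℤ))) ≤
            AddSubmonoid.closure (F : Set (Fin n → ℤ)) := by
          apply AddSubmonoid.closure_mono
          rw [hFset]
          exact Set.subset_union_left
        exact h2 h1
      have hβ'mem : β' ∈ AddSubmonoid.closure (F : Set (Fin n → ℤ)) := by
        apply AddSubmonoid.subset_closure
        rw [hFset]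
        exact Set.mem_union_right _ rfl
      have hsm : cc • β' ∈ AddSubmonoid.closure (F : Set (Fin n → ℤ)) := by
        have : cc • β' = cc.toNat • β' := by
          rw [← natCast_zsmul, Int.toNat_of_nonneg hccnn]
        rw [this]
        exact AddSubmonoid.nsmul_mem _ hβ'mem _
      have : α = δ + cc • β' := by rw [hδ]; ring
      rw [this]
      exact AddSubmonoid.add_mem _ hδmem hsm
  · -- trivial case : every integer point of V is zero
    push_neg at hex
    have hall : ∀ α : Fin n → ℤ, coeR α ∈ V → α = 0 := by
      intro α hα
      funext j
      have := hex j.1 j.2 α hα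
      simpa using this
    have hSeq : S = {0} := by
      ext α
      constructor
      · rintro ⟨-, hV⟩; exact hall α hV
      · rintro rfl; exact h0S
    have hconv : convC S = {0} := by
      rw [convC, show coeR '' S = coeR '' {0} from by rw [← hSeq, hS]]
      have : coeR '' ({0} : Set (Fin n → ℤ)) = {(0 : Fin n → ℝ)} := by
        rw [Set.image_singleton, coeR_zero]
      rw [this, convexHull_singleton]
    have hcl : intCl S = {0} := by
      ext α
      simp only [intCl, Set.mem_setOf_eq, hconv, closure_singleton, Set.mem_singleton_iff]
      constructor
      · intro h; exact coeR_inj (by rw [h, coeR_zero])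
      · rintro rfl; rw [coeR_zero]
    refine ⟨∅, ?_⟩
    rw [hcl]
    simp


/-- The submonoid `D_n = {α ∈ ℤⁿ : α ≤_lex 0}` is prismal. -/
theorem lex_nonpos_prismal {n : ℕ} :
    Prismal {α : Fin n → ℤ | α = 0 ∨ ∃ i : Fin n, (∀ j, j < i → α j = 0) ∧ α i < 0} := by
  exact ⟨lex_pure, fun V => lex_almost_prismal V⟩
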